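/- arXiv:math/0505103 — 4 statements merged into one kernel-verified Lean document; each statement's English description precedes it below -/
import Mathlib

section
/- The set Ω_SB of parameter pairs (a,b) ∈ ℝ² such that T_{ab} has a nonzero orbit (x_n)_{n∈ℤ} with sup_n ‖(x_{n+1},x_n)‖ ≤ 1 and ‖(x_1,x_0)‖ = 1 is a closed subset of ℝ². -/
private lemma Fcont' : Continuous (fun p : ℝ × ℝ × ℝ =>
    if p.2.2 ≥ 0 then p.1 * p.2.2 else p.2.1 * p.2.2) := by
  have h : (fun p : ℝ × ℝ × ℝ => if p.2.2 ≥ 0 then p.1 * p.2.2 else p.2.1 * p.2.2)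
      = fun p => p.1 * max p.2.2 0 + p.2.1 * min p.2.2 0 := by
    funext p
    rcases le_or_gt 0 p.2.2 with h | h
    · rw [if_pos h, max_eq_left h, min_eq_right h]; ring
    · rw [if_neg (not_le.mpr h), max_eq_right h.le, min_eq_left h.le]; ring
  rw [h]
  exact (continuous_fst.mul ((continuous_snd.comp continuous_snd).max continuous_const)).add
    ((continuous_fst.comp continuous_snd).mul
      ((continuous_snd.comp continuous_snd).min continuous_const))

/-- the set Ω_SB of parameters (a,b) such that T_{ab} has a
nonzero orbit (x_n) with sup_n ‖(x_{n+1},x_n)‖ ≤ 1 and ‖(x_1,x_0)‖ = 1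
is a closed subset of ℝ². -/
theorem stmt5
    (F : ℝ → ℝ → ℝ → ℝ) (hF : ∀ a b x, F a b x = if x ≥ 0 then a * x else b * x)
    (T : ℝ → ℝ → ℝ × ℝ → ℝ × ℝ)
    (hT : ∀ a b p, T a b p = (F a b p.1 - p.2, p.1))
    (ΩSB : Set (ℝ × ℝ))
    (hΩ : ΩSB = {q : ℝ × ℝ | ∃ x : ℤ → ℝ,
      (∀ n : ℤ, T q.1 q.2 (x (n + 1), x n) = (x (n + 2), x (n + 1))) ∧
      (∀ n : ℤ, ‖((x (n + 1), x n) : ℝ × ℝ)‖ ≤ 1) ∧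
      ‖((x 1, x 0) : ℝ × ℝ)‖ = 1}) :
    IsClosed ΩSB := by
  have hFc : Continuous (fun p : ℝ × ℝ × ℝ => F p.1 p.2.1 p.2.2) := by
    have : (fun p : ℝ × ℝ × ℝ => F p.1 p.2.1 p.2.2)
        = fun p : ℝ × ℝ × ℝ => if p.2.2 ≥ 0 then p.1 * p.2.2 else p.2.1 * p.2.2 := by
      funext p; rw [hF]
    rw [this]; exact Fcont'
  set Y := (ℤ → Set.Icc (-1:ℝ) 1) with hY
  let S : Set ((ℝ × ℝ) × Y) := {p |
    (∀ n : ℤ, T p.1.1 p.1.2 ((p.2 (n+1) : ℝ), (p.2 n : ℝ))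
        = ((p.2 (n+2) : ℝ), (p.2 (n+1) : ℝ))) ∧
    ‖(((p.2 1 : ℝ), (p.2 0 : ℝ)) : ℝ × ℝ)‖ = 1}
  have hc : ∀ n : ℤ, Continuous (fun p : (ℝ × ℝ) × Y => (p.2 n : ℝ)) := fun n =>
    continuous_subtype_val.comp ((continuous_apply n).comp continuous_snd)
  have hScl : IsClosed S := by
    apply IsClosed.inter
    · show IsClosed {p : (ℝ × ℝ) × Y | ∀ n : ℤ,
          T p.1.1 p.1.2 ((p.2 (n+1) : ℝ), (p.2 n : ℝ)) = ((p.2 (n+2) : ℝ), (p.2 (n+1) : ℝ))}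
      rw [Set.setOf_forall]
      apply isClosed_iInter
      intro n
      apply isClosed_eq
      · have : (fun p : (ℝ × ℝ) × Y => T p.1.1 p.1.2 ((p.2 (n+1) : ℝ), (p.2 n : ℝ)))
            = fun p => (F p.1.1 p.1.2 (p.2 (n+1) : ℝ) - (p.2 n : ℝ), ((p.2 (n+1) : ℝ))) := by
          funext p; rw [hT]
        rw [this]
        exact ((hFc.comp (((continuous_fst.comp continuous_fst).prodMk
          ((continuous_snd.comp continuous_fst).prodMk (hc (n+1)))))).sub (hc n)).prodMk
          (hc (n+1))
      · exact (hc (n+2)).prodMk (hc (n+1))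
    · exact isClosed_eq (Continuous.norm ((hc 1).prodMk (hc 0))) continuous_const
  have himg : ΩSB = Prod.fst '' S := by
    rw [hΩ]
    ext q
    constructor
    · rintro ⟨x, horb, hbd, hnorm⟩
      have hmem : ∀ n : ℤ, x n ∈ Set.Icc (-1:ℝ) 1 := by
        intro n
        have h2 := hbd n
        rw [Prod.norm_def] at h2
        have h3 : ‖x n‖ ≤ 1 := le_trans (le_max_right _ _) h2
        rw [Real.norm_eq_abs] at h3
        exact abs_le.mp h3
      refine ⟨(q, fun n => ⟨x n, hmem n⟩), ⟨?_, ?_⟩, rfl⟩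
      · intro n; exact horb n
      · exact hnorm
    · rintro ⟨⟨q', y⟩, ⟨horb, hnorm⟩, rfl⟩
      refine ⟨fun n => (y n : ℝ), fun n => horb n, ?_, hnorm⟩
      intro n
      rw [Prod.norm_def]
      apply max_le <;>
      · rw [Real.norm_eq_abs, abs_le]
        exact ⟨(y _).2.1, (y _).2.2⟩
  rw [himg]
  exact isClosedMap_fst_of_compactSpace S hScl
end

section
/- If (a,b) ∈ ℝ² is such that T_{ab} has at least one nonzero bounded orbit, then T_{ab} has a bounded orbit {v_n : n ∈ ℤ} attaining its supremum at n = 0, i.e. ‖v_0‖ = sup_{n∈ℤ} ‖T_{ab}^{(n)}(v_0)‖. -/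
/-!
The closure `K` of a bounded orbit is compact and invariant under the homeomorphism `T_{ab}` and
its inverse, so the norm attains its maximum on `K` at some `v`. The whole orbit of `v` stays in
`K`, hence is bounded by `‖v‖`, and `v ≠ 0` because `K` contains a nonzero point of the given orbit.
-/

open Set

namespace Homeomorph

variable {X : Type*} [TopologicalSpace X]

theorem eq_zpow_apply_of_succ (e : X ≃ₜ X) {u : ℤ → X} (hu : ∀ n, u (n + 1) = e (u n))
    (n : ℤ) : u n = (e ^ n) (u 0) := by
  induction n using Int.induction_on with
  | zero => rfl
  | succ k ih => rw [hu, ih, add_comm, zpow_one_add, mul_apply]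
  | pred k ih =>
    apply e.injective
    rw [← hu, sub_add_cancel, ih, ← mul_apply, ← zpow_one_add, add_sub_cancel]

theorem zpow_apply_mem_closure_orbit (e : X ≃ₜ X) {x p : X}
    (hp : p ∈ closure (range fun n : ℤ => (e ^ n) x)) (k : ℤ) :
    (e ^ k) p ∈ closure (range fun n : ℤ => (e ^ n) x) := by
  have hinv : (e ^ k) '' range (fun n : ℤ => (e ^ n) x) ⊆ range fun n : ℤ => (e ^ n) x := by
    rintro _ ⟨_, ⟨n, rfl⟩, rfl⟩
    exact ⟨k + n, show (e ^ (k + n)) x = (e ^ k) ((e ^ n) x) by rw [zpow_add, mul_apply]⟩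
  exact closure_mono hinv ((e ^ k).image_closure _ ▸ mem_image_of_mem _ hp)

theorem exists_forall_le_of_isCompact_closure_orbit {α : Type*} [LinearOrder α]
    [TopologicalSpace α] [ClosedIciTopology α] (e : X ≃ₜ X) {f : X → α} (hf : Continuous f)
    (x : X) (hx : IsCompact (closure (range fun n : ℤ => (e ^ n) x))) :
    ∃ p, (∀ m : ℤ, f ((e ^ m) x) ≤ f p) ∧ ∀ n : ℤ, f ((e ^ n) p) ≤ f p := by
  obtain ⟨p, hpK, hmax⟩ :=
    hx.exists_isMaxOn ⟨x, subset_closure ⟨0, rfl⟩⟩ hf.continuousOn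
  exact ⟨p, fun m => hmax (subset_closure ⟨m, rfl⟩),
    fun n => hmax (e.zpow_apply_mem_closure_orbit hpK n)⟩

end Homeomorph

section HenonMap

variable {G : Type*} [AddCommGroup G] [TopologicalSpace G] [ContinuousSub G]

def henonMap (F : G → G) (hF : Continuous F) : G × G ≃ₜ G × G where
  toFun p := (F p.1 - p.2, p.1)
  invFun q := (q.2, F q.2 - q.1)
  left_inv p := by simp
  right_inv q := by simp
  continuous_toFun := by fun_prop
  continuous_invFun := by fun_prop

variable (F : G → G) (hF : Continuous F)

@[simp]
theorem henonMap_apply (p : G × G) : henonMap F hF p = (F p.1 - p.2, p.1) := rfl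

theorem henonMap_zpow_eq (v : G × G) (n : ℤ) :
    ((((henonMap F hF ^ (n + 1)) v).2, ((henonMap F hF ^ n) v).2) : G × G) =
      (henonMap F hF ^ n) v := by
  rw [add_comm, zpow_one_add, Homeomorph.mul_apply, henonMap_apply]

theorem henonMap_zpow_snd_recurrence (v : G × G) (n : ℤ) :
    henonMap F hF (((henonMap F hF ^ (n + 1)) v).2, ((henonMap F hF ^ n) v).2) =
      (((henonMap F hF ^ (n + 2)) v).2, ((henonMap F hF ^ (n + 1)) v).2) := by
  rw [henonMap_zpow_eq, show n + 2 = n + 1 + 1 by ring, henonMap_zpow_eq, add_comm n 1,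
    zpow_one_add, Homeomorph.mul_apply]

theorem henonMap_zpow_one_zero (v : G × G) :
    ((((henonMap F hF ^ (1 : ℤ)) v).2, ((henonMap F hF ^ (0 : ℤ)) v).2) : G × G) = v := by
  have h := henonMap_zpow_eq F hF v 0
  simp only [zero_add, zpow_zero, Homeomorph.one_apply] at h ⊢
  exact h

theorem henonMap_zpow_of_recurrence {x : ℤ → G}
    (hx : ∀ n, henonMap F hF (x (n + 1), x n) = (x (n + 2), x (n + 1))) (n : ℤ) :
    (x (n + 1), x n) = (henonMap F hF ^ n) (x 1, x 0) :=
  (henonMap F hF).eq_zpow_apply_of_succ (u := fun n => (x (n + 1), x n))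
    (fun n => by rw [hx, add_assoc, one_add_one_eq_two]) n

end HenonMap

theorem continuous_ite_nonneg_mul (a b : ℝ) :
    Continuous fun x : ℝ => if 0 ≤ x then a * x else b * x :=
  Continuous.if_le (by fun_prop) (by fun_prop) continuous_const continuous_id
    (fun x hx => by simp [← hx])

/-- if T_{ab} has a nonzero bounded orbit, then it has a bounded
orbit attaining its supremum norm at n = 0. -/
theorem stmt6 (a b : ℝ)
    (F : ℝ → ℝ) (hF : ∀ x, F x = if x ≥ 0 then a * x else b * x)
    (T : ℝ × ℝ → ℝ × ℝ) (hT : ∀ p, T p = (F p.1 - p.2, p.1))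
    (hbdd : ∃ x : ℤ → ℝ,
      (∀ n : ℤ, T (x (n + 1), x n) = (x (n + 2), x (n + 1))) ∧
      (∃ n : ℤ, x n ≠ 0) ∧
      (∃ C : ℝ, ∀ n : ℤ, ‖((x (n + 1), x n) : ℝ × ℝ)‖ ≤ C)) :
    ∃ y : ℤ → ℝ,
      (∀ n : ℤ, T (y (n + 1), y n) = (y (n + 2), y (n + 1))) ∧
      (∃ n : ℤ, y n ≠ 0) ∧
      (∀ n : ℤ, ‖((y (n + 1), y n) : ℝ × ℝ)‖ ≤ ‖((y 1, y 0) : ℝ × ℝ)‖) := by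
  obtain ⟨x, hx, ⟨n₀, hn₀⟩, C, hC⟩ := hbdd
  have hFc : Continuous F := by rw [funext hF]; exact continuous_ite_nonneg_mul a b
  set e := henonMap F hFc
  have he : ∀ p, e p = T p := fun p => (hT p).symm
  have horbit := henonMap_zpow_of_recurrence F hFc fun n => (he _).trans (hx n)
  have hcpt : IsCompact (closure (range fun n : ℤ => (e ^ n) (x 1, x 0))) :=
    (isBounded_iff_forall_norm_le.2 ⟨C, forall_mem_range.2 fun n => horbit n ▸ hC n⟩)
      |>.isCompact_closure
  obtain ⟨v, hxv, hv⟩ := e.exists_forall_le_of_isCompact_closure_orbit continuous_norm _ hcpt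
  have hv01 := henonMap_zpow_one_zero F hFc v
  refine ⟨fun n => ((e ^ n) v).2, fun n => ?_, ?_, fun n => ?_⟩
  · rw [← he]; exact henonMap_zpow_snd_recurrence F hFc v n
  · by_contra! hzero
    have hv0 : v = 0 := by rw [← hv01, hzero, hzero]; rfl
    have hx0 : ((x (n₀ + 1), x n₀) : ℝ × ℝ) = 0 := by
      rw [← norm_le_zero_iff, horbit, ← norm_zero (E := ℝ × ℝ), ← hv0]
      exact hxv n₀
    exact hn₀ (congrArg Prod.snd hx0)
  · beta_reduce
    rw [henonMap_zpow_eq, hv01]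
    exact hv n
end

section
/- Fix real μ ≠ 0. If S and S' are sign sequences in {+1,-1}^{n-1} such that the pairs (p_n^S(a), p_{n-1}^S(a)) and (p_n^{S'}(a), p_{n-1}^{S'}(a)) are equal as polynomials in ℝ[a], then S = S'. That is, the sign sequence is uniquely reconstructible from the final pair of polynomials. -/
open Polynomial

lemma stmt14_mon (μ : ℝ) (S : ℕ → ℤ) (p : ℕ → Polynomial ℝ)
    (h0 : p 0 = 0) (h1 : p 1 = 1)
    (hrec : ∀ j : ℕ, p (j + 2)
      = (if S (j + 1) = 1 then X else X - C (2 * μ)) * p (j + 1) - p j) :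
    ∀ j, (p (j+1)).Monic ∧ (p (j+1)).degree = j := by
  intro j
  induction j using Nat.strong_induction_on with
  | _ j ih =>
    match j with
    | 0 => simp [h1, monic_one]
    | Nat.succ m =>
      set q : Polynomial ℝ := if S (m + 1) = 1 then X else X - C (2 * μ) with hqdef
      have hqm : q.Monic := by
        rw [hqdef]; split
        · exact monic_X
        · exact monic_X_sub_C _
      have hqd : q.degree = 1 := by
        rw [hqdef]; split
        · exact degree_X
        · exact degree_X_sub_C _
      obtain ⟨hm, hd⟩ := ih m (by omega)
      have hmulm : (q * p (m+1)).Monic := hqm.mul hm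
      have hmuld : (q * p (m+1)).degree = (m+1 : ℕ) := by
        rw [degree_mul, hqd, hd, add_comm]
        rw [← Nat.cast_one, ← Nat.cast_add]
      have hdlow : (p m).degree < (q * p (m+1)).degree := by
        rw [hmuld]
        match m with
        | 0 =>
          rw [h0, degree_zero]
          exact WithBot.bot_lt_coe _
        | Nat.succ l =>
          obtain ⟨_, hd'⟩ := ih l (by omega)
          rw [hd']
          exact_mod_cast Nat.lt_succ_of_lt (Nat.lt_succ_self l)
      constructor
      · rw [hrec m]
        exact hmulm.sub_of_left hdlow
      · rw [hrec m, degree_sub_eq_left_of_degree_lt hdlow, hmuld]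

lemma stmt14_step (μ : ℝ) (hμ : μ ≠ 0)
    (S S' : ℕ → ℤ) (hS : ∀ i, S i = 1 ∨ S i = -1)
    (hS' : ∀ i, S' i = 1 ∨ S' i = -1)
    (p p' : ℕ → Polynomial ℝ)
    (h0 : p 0 = 0) (h1 : p 1 = 1)
    (hrec : ∀ j : ℕ, p (j + 2)
      = (if S (j + 1) = 1 then X else X - C (2 * μ)) * p (j + 1) - p j)
    (h0' : p' 0 = 0) (h1' : p' 1 = 1)
    (hrec' : ∀ j : ℕ, p' (j + 2)
      = (if S' (j + 1) = 1 then X else X - C (2 * μ)) * p' (j + 1) - p' j)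
    (k : ℕ) (e2 : p (k+2) = p' (k+2)) (e1 : p (k+1) = p' (k+1)) :
    S (k+1) = S' (k+1) ∧ p k = p' k := by
  have hmon := stmt14_mon μ S p h0 h1 hrec
  have hmon' := stmt14_mon μ S' p' h0' h1' hrec'
  set c : Polynomial ℝ := if S (k + 1) = 1 then X else X - C (2 * μ) with hc
  set c' : Polynomial ℝ := if S' (k + 1) = 1 then X else X - C (2 * μ) with hc'
  have key : p k - p' k = (c - c') * p (k+1) := by
    have h := (hrec k).symm.trans (e2.trans (hrec' k))
    rw [← e1] at h
    -- h : c * p (k+1) - p k = c' * p (k+1) - p' k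
    linear_combination -h
  by_cases hss : S (k+1) = S' (k+1)
  · refine ⟨hss, ?_⟩
    have : c = c' := by rw [hc, hc', hss]
    rw [this, sub_self, zero_mul, sub_eq_zero] at key
    exact key
  · exfalso
    have h2 : (2 * μ : ℝ) ≠ 0 := mul_ne_zero two_ne_zero hμ
    have hcc : c - c' = C (2 * μ) ∨ c - c' = -C (2 * μ) := by
      rcases hS (k+1) with hs | hs <;> rcases hS' (k+1) with hs' | hs'
      · exact absurd (hs.trans hs'.symm) hss
      · left
        rw [hc, hc', if_pos hs, if_neg (by simp [hs'])]
        ring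
      · right
        rw [hc, hc', if_neg (by simp [hs]), if_pos hs']
        ring
      · exact absurd (hs.trans hs'.symm) hss
    obtain ⟨hm1, hd1⟩ := hmon k
    have hdeg1 : ((c - c') * p (k+1)).degree = (k : ℕ) := by
      rcases hcc with h | h
      · rw [h, degree_mul, degree_C h2, hd1, zero_add]
      · rw [h, neg_mul, degree_neg, degree_mul, degree_C h2, hd1, zero_add]
    have hdeg2 : (p k - p' k).degree < (k : ℕ) := by
      match k with
      | 0 =>
        rw [h0, h0', sub_self, degree_zero]
        exact WithBot.bot_lt_coe 0
      | Nat.succ m =>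
        obtain ⟨ha1, hb1⟩ := hmon m
        obtain ⟨ha2, hb2⟩ := hmon' m
        by_cases hpk : p (m+1) = p' (m+1)
        · rw [hpk, sub_self, degree_zero]
          exact WithBot.bot_lt_coe _
        · have hlt := degree_sub_lt (hb1.trans hb2.symm) ha1.ne_zero
            (by rw [ha1.leadingCoeff, ha2.leadingCoeff])
          rw [hb1] at hlt
          exact hlt.trans (by exact_mod_cast Nat.lt_succ_self m)
    rw [key, hdeg1] at hdeg2
    exact lt_irrefl _ hdeg2

/-- for μ ≠ 0, the sign sequence (S_1,…,S_{n-1}) is uniquely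
reconstructible from the pair of polynomials (p_n^S, p_{n-1}^S). -/
theorem stmt14 (μ : ℝ) (hμ : μ ≠ 0) (n : ℕ)
    (S S' : ℕ → ℤ) (hS : ∀ i, S i = 1 ∨ S i = -1)
    (hS' : ∀ i, S' i = 1 ∨ S' i = -1)
    (p p' : ℕ → Polynomial ℝ)
    (h0 : p 0 = 0) (h1 : p 1 = 1)
    (hrec : ∀ j : ℕ, p (j + 2)
      = (if S (j + 1) = 1 then X else X - C (2 * μ)) * p (j + 1) - p j)
    (h0' : p' 0 = 0) (h1' : p' 1 = 1)
    (hrec' : ∀ j : ℕ, p' (j + 2)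
      = (if S' (j + 1) = 1 then X else X - C (2 * μ)) * p' (j + 1) - p' j)
    (heq : p n = p' n ∧ p (n - 1) = p' (n - 1)) :
    ∀ j : ℕ, 1 ≤ j → j ≤ n - 1 → S j = S' j := by
  have step := stmt14_step μ hμ S S' hS hS' p p' h0 h1 hrec h0' h1' hrec'
  have aux : ∀ i, p (n - i) = p' (n - i) ∧ p (n - i - 1) = p' (n - i - 1) := by
    intro i
    induction i with
    | zero => simpa using heq
    | succ i ih =>
      obtain ⟨ha, hb⟩ := ih
      by_cases hni : n - i - 1 = 0
      · constructor
        · have : n - (i+1) = n - i - 1 := by omega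
          rw [this]; exact hb
        · have : n - (i+1) - 1 = 0 := by omega
          rw [this, h0, h0']
      · set k := n - i - 2 with hk
        have hk2 : n - i = k + 2 := by omega
        have hk1 : n - i - 1 = k + 1 := by omega
        rw [hk2] at ha; rw [hk1] at hb
        obtain ⟨_, hpk⟩ := step k ha hb
        constructor
        · have : n - (i+1) = k + 1 := by omega
          rw [this]; exact hb
        · have : n - (i+1) - 1 = k := by omega
          rw [this]; exact hpk
  intro j hj1 hjn
  have e2 : p (j + 1) = p' (j + 1) := by
    have := (aux (n - j - 1)).1
    have hh : n - (n - j - 1) = j + 1 := by omega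
    rwa [hh] at this
  have e1 : p j = p' j := by
    have := (aux (n - j - 1)).2
    have hh : n - (n - j - 1) - 1 = j := by omega
    rwa [hh] at this
  have hj : j = (j - 1) + 1 := by omega
  rw [hj]
  exact (step (j-1) (by rw [show j - 1 + 2 = j + 1 by omega]; exact e2)
    (by rw [← hj]; exact e1)).1
end

section
/- For μ ≥ 0, if -2 ≤ a < 0 and the map T_{μν}, where a = ν + μ, has a bounded nonzero orbit, then μ ≤ 2/|a| - |a|/2. -/
/-- for μ ≥ 0 and -2 ≤ a < 0 with a = ν + μ (so b = ν - μ
= a - 2μ), if T_{ab} has a bounded nonzero orbit then μ ≤ 2/|a| - |a|/2. -/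
theorem stmt17 (μ ν a b : ℝ) (hμ : 0 ≤ μ) (ha : a = ν + μ) (hb : b = ν - μ)
    (haR : -2 ≤ a) (haL : a < 0)
    (F : ℝ → ℝ) (hF : ∀ x, F x = if x ≥ 0 then a * x else b * x)
    (T : ℝ × ℝ → ℝ × ℝ) (hT : ∀ p, T p = (F p.1 - p.2, p.1))
    (hbdd : ∃ x : ℤ → ℝ,
      (∀ n : ℤ, T (x (n + 1), x n) = (x (n + 2), x (n + 1))) ∧
      (∃ n : ℤ, x n ≠ 0) ∧
      (∃ C : ℝ, ∀ n : ℤ, |x n| ≤ C)) :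
    μ ≤ 2 / |a| - |a| / 2 := by
  obtain ⟨x, hrec, ⟨n₀, hx0⟩, C, hC⟩ := hbdd
  have hba : b = a - 2 * μ := by rw [ha] at *; linarith [hb]
  have hb0 : b < 0 := by linarith
  -- the second order recurrence
  have hstep : ∀ n : ℤ, x (n + 1) = (if x n ≥ 0 then a * x n else b * x n) - x (n - 1) := by
    intro n
    have h := hrec (n - 1)
    have e1 : n - 1 + 1 = n := by ring
    have e2 : n - 1 + 2 = n + 1 := by ring
    rw [e1, e2, hT] at h
    have h1 := congrArg Prod.fst h
    simp only [Prod.fst] at h1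
    rw [hF] at h1
    exact h1.symm
  -- sup and inf
  set S : Set ℝ := Set.range x with hS
  have hne : S.Nonempty := ⟨x 0, ⟨0, rfl⟩⟩
  have hbA : BddAbove S := ⟨C, by rintro y ⟨n, rfl⟩; exact (abs_le.mp (hC n)).2⟩
  have hbB : BddBelow S := ⟨-C, by rintro y ⟨n, rfl⟩; exact (abs_le.mp (hC n)).1⟩
  set M := sSup S with hM
  set m := sInf S with hm
  have hle : ∀ n, x n ≤ M := fun n => le_csSup hbA ⟨n, rfl⟩
  have hge : ∀ n, m ≤ x n := fun n => csInf_le hbB ⟨n, rfl⟩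
  -- m < 0
  have hm0 : m < 0 := by
    by_contra h
    push_neg at h
    have hpos : ∀ n, 0 ≤ x n := fun n => le_trans h (hge n)
    have hz : ∀ n : ℤ, x (n + 1) = 0 := by
      intro n
      have h1 := hstep n
      rw [if_pos (hpos n)] at h1
      have h2 : a * x n ≤ 0 := mul_nonpos_of_nonpos_of_nonneg (le_of_lt haL) (hpos n)
      have := hpos (n + 1)
      have := hpos (n - 1)
      linarith
    have : x n₀ = 0 := by
      have := hz (n₀ - 1)
      have e : n₀ - 1 + 1 = n₀ := by ring
      rwa [e] at this
    exact hx0 this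
  -- M > 0 : there is a negative value, whose image is positive
  have hM0 : 0 < M := by
    obtain ⟨y, hyS, hy⟩ := exists_lt_of_csInf_lt hne hm0
    obtain ⟨k, rfl⟩ := hyS
    have h1 := hstep k
    rw [if_neg (by linarith : ¬ x k ≥ 0)] at h1
    have h2 : 0 < b * x k := mul_pos_of_neg_of_neg hb0 hy
    have h3 := hle (k + 1)
    -- x (k+1) = b * x k - x (k-1) ≥ b * x k + m... need -x(k-1) ≥ -M
    have h4 := hle (k - 1)
    -- use: M ≥ x (k+1) = b*x k - x(k-1) ≥ b*x k - M > -M + b*x k, so 2M > b*x k > 0.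
    nlinarith
  -- key inequality 1 : 2 m ≤ a M
  have key1 : 2 * m ≤ a * M := by
    by_contra h
    push_neg at h
    set ε : ℝ := min (M / 2) ((2 * m - a * M) / (2 * (-a))) with hε
    have h2a : (0:ℝ) < 2 * (-a) := by linarith
    have hεpos : 0 < ε := by
      apply lt_min (by linarith)
      apply div_pos (by linarith) h2a
    have hεM : ε ≤ M / 2 := min_le_left _ _
    have hεle : ε ≤ (2 * m - a * M) / (2 * (-a)) := min_le_right _ _
    have hkey : ε * (2 * (-a)) ≤ 2 * m - a * M := (le_div_iff₀ h2a).mp hεle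
    obtain ⟨y, hyS, hy⟩ := exists_lt_of_lt_csSup hne (by linarith : M - ε < M)
    obtain ⟨k, rfl⟩ := hyS
    have hxk : 0 ≤ x k := by linarith
    have h1 := hstep k
    rw [if_pos hxk] at h1
    have hprod : a * x k < a * (M - ε) := mul_lt_mul_of_neg_left hy haL
    have hexp : a * (M - ε) = a * M - a * ε := by ring
    have := hge (k + 1)
    have := hge (k - 1)
    linarith
  -- key inequality 2 : b m ≤ 2 M
  have key2 : b * m ≤ 2 * M := by
    by_contra h
    push_neg at h
    set ε : ℝ := min ((-m) / 2) ((b * m - 2 * M) / (2 * (-b))) with hε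
    have h2b : (0:ℝ) < 2 * (-b) := by linarith
    have hεpos : 0 < ε := by
      apply lt_min (by linarith)
      apply div_pos (by linarith) h2b
    have hεm : ε ≤ (-m) / 2 := min_le_left _ _
    have hεle : ε ≤ (b * m - 2 * M) / (2 * (-b)) := min_le_right _ _
    have hkey : ε * (2 * (-b)) ≤ b * m - 2 * M := (le_div_iff₀ h2b).mp hεle
    obtain ⟨y, hyS, hy⟩ := exists_lt_of_csInf_lt hne (by linarith : m < m + ε)
    obtain ⟨k, rfl⟩ := hyS
    have hxk : ¬ x k ≥ 0 := by push_neg; linarith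
    have h1 := hstep k
    rw [if_neg hxk] at h1
    have hprod : b * (m + ε) < b * x k := mul_lt_mul_of_neg_left hy hb0
    have hexp : b * (m + ε) = b * m + b * ε := by ring
    have := hle (k + 1)
    have := hle (k - 1)
    linarith
  -- deduce a*b ≤ 4
  have habM : a * b * M ≤ 4 * M := by
    have hnb : (0:ℝ) ≤ -b := by linarith
    have h3 : (-b) * (2 * m) ≤ (-b) * (a * M) := mul_le_mul_of_nonneg_left key1 hnb
    nlinarith
  have hab : a * b ≤ 4 := le_of_mul_le_mul_right habM hM0
  -- conclude
  have hA : (0:ℝ) < -a := by linarith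
  rw [abs_of_neg haL, le_sub_iff_add_le, le_div_iff₀ hA]
  rw [hba] at hab
  nlinarith [hab]
end
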